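/- Truth Lemma for model graphs: Let M be a model graph. Then for all states X of M and all formulas φ ∈ X, we have M, X ⊨ φ. -/

import Mathlib

mutual
inductive Formula : Type
  | bot : Formula
  | atom : ℕ → Formula
  | and : Formula → Formula → Formula
  | neg : Formula → Formula
  | box : Program → Formula → Formula
inductive Program : Type
  | atom : ℕ → Program
  | test : Formula → Program
  | union : Program → Program → Program
  | comp : Program → Program → Program
  | star : Program → Program
end

structure KripkeModel (W : Type) : Type where
  rel : ℕ → W → W → Prop
  val : W → ℕ → Prop

mutual
def evaluate {W : Type} (M : KripkeModel W) : W → Formula → Prop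
  | _, .bot => False
  | w, .atom p => M.val w p
  | w, .and φ ψ => evaluate M w φ ∧ evaluate M w ψ
  | w, .neg φ => ¬ evaluate M w φ
  | w, .box α φ => ∀ v, relate M α w v → evaluate M v φ
def relate {W : Type} (M : KripkeModel W) : Program → W → W → Prop
  | .atom a, w, v => M.rel a w v
  | .test τ, w, v => w = v ∧ evaluate M w τ
  | .union α β, w, v => relate M α w v ∨ relate M β w v
  | .comp α β, w, v => ∃ u, relate M α w u ∧ relate M β u v
  | .star α, w, v => Relation.ReflTransGen (fun x y => relate M α x y) w v
end

/-- Relation interpreting a list of programs: composition, identity for `[]`. -/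
def relateSeq {W : Type} (M : KripkeModel W) : List Program → W → W → Prop
  | [], v, w => v = w
  | α :: δ, v, w => ∃ u, relate M α v u ∧ relateSeq M δ u w

/-- Implication, defined from ¬ and ∧. -/
def Formula.imp (φ ψ : Formula) : Formula := .neg (.and φ (.neg ψ))

/-- Disjunction, defined from ¬ and ∧. -/
def Formula.disj (φ ψ : Formula) : Formula := .neg (.and (.neg φ) (.neg ψ))

def semImplies (φ ψ : Formula) : Prop :=
  ∀ (W : Type) (M : KripkeModel W) (w : W), evaluate M w φ → evaluate M w ψ

def semEquiv (φ ψ : Formula) : Prop :=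
  ∀ (W : Type) (M : KripkeModel W) (w : W), evaluate M w φ ↔ evaluate M w ψ

def valid (φ : Formula) : Prop :=
  ∀ (W : Type) (M : KripkeModel W) (w : W), evaluate M w φ

mutual
/-- Uniform substitution on formulas. -/
def substF (σ : ℕ → Formula) : Formula → Formula
  | .bot => .bot
  | .atom p => σ p
  | .and φ ψ => .and (substF σ φ) (substF σ ψ)
  | .neg φ => .neg (substF σ φ)
  | .box α φ => .box (substP σ α) (substF σ φ)
/-- Uniform substitution on programs. -/
def substP (σ : ℕ → Formula) : Program → Program
  | .atom a => .atom a
  | .test τ => .test (substF σ τ)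
  | .union α β => .union (substP σ α) (substP σ β)
  | .comp α β => .comp (substP σ α) (substP σ β)
  | .star α => .star (substP σ α)
end

/-- The substitution ρ/x mapping x to ρ and all other atoms to themselves. -/
def substOne (x : ℕ) (ρ : Formula) : ℕ → Formula := fun p => if p = x then ρ else .atom p

mutual
/-- Occurrence of an atomic proposition in a formula. -/
def occursF (x : ℕ) : Formula → Prop
  | .bot => False
  | .atom p => p = x
  | .and φ ψ => occursF x φ ∨ occursF x ψ
  | .neg φ => occursF x φ
  | .box α φ => occursP x α ∨ occursF x φ
/-- Occurrence of an atomic proposition in a program (including inside tests). -/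
def occursP (x : ℕ) : Program → Prop
  | .atom _ => False
  | .test τ => occursF x τ
  | .union α β => occursP x α ∨ occursP x β
  | .comp α β => occursP x α ∨ occursP x β
  | .star α => occursP x α
end

mutual
/-- Vocabulary of a formula: atomic propositions (inl) and atomic programs (inr). -/
def vocF : Formula → Set (ℕ ⊕ ℕ)
  | .bot => ∅
  | .atom p => {Sum.inl p}
  | .and φ ψ => vocF φ ∪ vocF ψ
  | .neg φ => vocF φ
  | .box α φ => vocP α ∪ vocF φ
def vocP : Program → Set (ℕ ⊕ ℕ)
  | .atom a => {Sum.inr a}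
  | .test τ => vocF τ
  | .union α β => vocP α ∪ vocP β
  | .comp α β => vocP α ∪ vocP β
  | .star α => vocP α
end

/-- Shallow tests of a program. -/
def TestsOf : Program → Set Formula
  | .atom _ => ∅
  | .test τ => {τ}
  | .union α β => TestsOf α ∪ TestsOf β
  | .comp α β => TestsOf α ∪ TestsOf β
  | .star α => TestsOf α

/-- Shallow subprograms of a program. -/
def ProgsOf : Program → Set Program
  | .atom a => {.atom a}
  | .test τ => {.test τ}
  | .union α β => {.union α β} ∪ ProgsOf α ∪ ProgsOf β
  | .comp α β => {.comp α β} ∪ ProgsOf α ∪ ProgsOf β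
  | .star α => {.star α} ∪ ProgsOf α

/-- Iterated boxes: □(δ̄, φ) = [δ₁]…[δₙ]φ. -/
def boxes : List Program → Formula → Formula
  | [], φ => φ
  | α :: δ, φ => .box α (boxes δ φ)

/-- Test profiles of a program: subsets of its shallow tests. -/
def TP (α : Program) : Set (Set Formula) := {ℓ | ℓ ⊆ TestsOf α}

/-- The sets of program lists P^ℓ. -/
def Pfun (ℓ : Set Formula) : Program → Set (List Program)
  | .atom a => {[.atom a]}
  | .test τ => {l | l = [] ∧ τ ∈ ℓ}
  | .union α β => Pfun ℓ α ∪ Pfun ℓ β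
  | .comp α β => {l | ∃ δ ∈ Pfun ℓ α, δ ≠ [] ∧ l = δ ++ [β]} ∪ {l | l ∈ Pfun ℓ β ∧ [] ∈ Pfun ℓ α}
  | .star α => {[]} ∪ {l | ∃ δ ∈ Pfun ℓ α, δ ≠ [] ∧ l = δ ++ [.star α]}

/-- F^ℓ(α): negations of the failed tests. -/
def Ffun (ℓ : Set Formula) (α : Program) : Set Formula :=
  {φ | ∃ τ, τ ∈ TestsOf α ∧ τ ∉ ℓ ∧ φ = Formula.neg τ}

/-- X^ℓ_{α,ψ}. -/
def Xset (ℓ : Set Formula) (α : Program) (ψ : Formula) : Set Formula :=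
  Ffun ℓ α ∪ {φ | ∃ δ ∈ Pfun ℓ α, φ = boxes δ ψ}

/-- unfold_□(α, ψ). -/
def unfoldBox (α : Program) (ψ : Formula) : Set (Set Formula) :=
  {Γ | ∃ ℓ ∈ TP α, Γ = Xset ℓ α ψ}

/-- The function H for diamond unfolding. -/
def Hfun : Program → Set (Set Formula × List Program)
  | .atom a => {(∅, [.atom a])}
  | .test τ => {({τ}, [])}
  | .union α β => Hfun α ∪ Hfun β
  | .comp α β =>
      {p | (∃ X δ, (X, δ) ∈ Hfun α ∧ δ ≠ [] ∧ p = (X, δ ++ [β])) ∨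
           (∃ X Y δ, (X, ([] : List Program)) ∈ Hfun α ∧ (Y, δ) ∈ Hfun β ∧ p = (X ∪ Y, δ))}
  | .star α =>
      insert (∅, ([] : List Program))
        {p | ∃ X δ, (X, δ) ∈ Hfun α ∧ δ ≠ [] ∧ p = (X, δ ++ [Program.star α])}

/-- unfold_◇(α, ψ). -/
def unfoldDiamond (α : Program) (ψ : Formula) : Set (Set Formula) :=
  {Γ | ∃ p ∈ Hfun α, Γ = p.1 ∪ {Formula.neg (boxes p.2 ψ)}}

/-- Saturated sets of formulas. -/
def Saturated (Y : Set Formula) : Prop :=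
  (∀ φ, Formula.neg (.neg φ) ∈ Y → φ ∈ Y) ∧
  (∀ φ ψ, Formula.and φ ψ ∈ Y → φ ∈ Y ∧ ψ ∈ Y) ∧
  (∀ φ ψ, Formula.neg (.and φ ψ) ∈ Y → Formula.neg φ ∈ Y ∨ Formula.neg ψ ∈ Y) ∧
  (∀ α φ, Formula.box α φ ∈ Y → ∃ Δ ∈ unfoldBox α φ, Δ ⊆ Y) ∧
  (∀ α φ, Formula.neg (.box α φ) ∈ Y → ∃ Δ ∈ unfoldDiamond α φ, Δ ⊆ Y)

/-- Single negation. -/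
def snegg : Formula → Formula
  | .neg φ => φ
  | φ => .neg φ

mutual
/-- Subformulas of a formula. -/
def subfF : Formula → Set Formula
  | .bot => {.bot}
  | .atom p => {.atom p}
  | .and φ ψ => {.and φ ψ} ∪ subfF φ ∪ subfF ψ
  | .neg φ => {.neg φ} ∪ subfF φ
  | .box α φ => {.box α φ} ∪ subfP α ∪ subfF φ
/-- Formulas occurring in a program. -/
def subfP : Program → Set Formula
  | .atom _ => ∅
  | .test τ => subfF τ
  | .union α β => subfP α ∪ subfP β
  | .comp α β => subfP α ∪ subfP β
  | .star α => subfP α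
end

/-- Fischer-Ladner closed sets. -/
def FLclosed (S : Set Formula) : Prop :=
  (∀ φ ∈ S, snegg φ ∈ S) ∧
  (∀ φ ∈ S, subfF φ ⊆ S) ∧
  (∀ α β φ, Formula.box (.union α β) φ ∈ S → Formula.box α φ ∈ S ∧ Formula.box β φ ∈ S) ∧
  (∀ α β φ, Formula.box (.comp α β) φ ∈ S → Formula.box α (.box β φ) ∈ S) ∧
  (∀ α φ, Formula.box (.star α) φ ∈ S → Formula.box α (.box (.star α) φ) ∈ S)

/-- Fischer-Ladner closure: the smallest Fischer-Ladner closed superset. -/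
def FL (X : Set Formula) : Set Formula := {φ | ∀ S, X ⊆ S → FLclosed S → φ ∈ S}

mutual
def lenF : Formula → ℕ
  | .bot => 1
  | .atom _ => 1
  | .and φ ψ => 1 + lenF φ + lenF ψ
  | .neg φ => 1 + lenF φ
  | .box α φ => 1 + lenP α + lenF φ
/-- Length (size) of a program. -/
def lenP : Program → ℕ
  | .atom _ => 1
  | .test τ => 1 + lenF τ
  | .union α β => 1 + lenP α + lenP β
  | .comp α β => 1 + lenP α + lenP β
  | .star α => 1 + lenP α
end

/-- Sum of distances along a list of states (consecutive pairs). -/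
noncomputable def listSum {W : Type} (d : W → W → ℕ∞) : List W → ℕ∞
  | [] => 0
  | [_] => 0
  | a :: b :: rest => d a b + listSum d (b :: rest)

open Classical in
/-- The α-distance between states. -/
noncomputable def distance {W : Type} (M : KripkeModel W) : Program → W → W → ℕ∞
  | .atom a, v, w => if M.rel a v w then 1 else ⊤
  | .test τ, v, w => if v = w ∧ evaluate M v τ then 0 else ⊤
  | .union α β, v, w => min (distance M α v w) (distance M β v w)
  | .comp α β, v, w => ⨅ u, distance M α v u + distance M β u w
  | .star α, v, w =>
      ⨅ (l : List W) (_ : l.head? = some v ∧ l.getLast? = some w),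
        listSum (fun x y => distance M α x y) l

open Classical in
/-- Distance along a list of programs. -/
noncomputable def distanceSeq {W : Type} (M : KripkeModel W) : List Program → W → W → ℕ∞
  | [], v, w => if v = w then 0 else ⊤
  | α :: δ, v, w => ⨅ u, distance M α v u + distanceSeq M δ u w

/-- The relation Q_α on a type of "states" S carrying formula membership `mem`. -/
def Qprog {S : Type} (mem : Formula → S → Prop) (R : ℕ → S → S → Prop) : Program → S → S → Prop
  | .atom a => R a
  | .test τ => fun X Y => X = Y ∧ mem τ X
  | .union α β => fun X Y => Qprog mem R α X Y ∨ Qprog mem R β X Y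
  | .comp α β => fun X Y => ∃ U, Qprog mem R α X U ∧ Qprog mem R β U Y
  | .star α => Relation.ReflTransGen (fun X Y => Qprog mem R α X Y)

/-- Q along a list of programs, with Id_W (restricted identity) for the empty list. -/
def Qseq {S : Type} (mem : Formula → S → Prop) (R : ℕ → S → S → Prop) (Wset : Set S) :
    List Program → S → S → Prop
  | [] => fun Y Z => Y = Z ∧ Y ∈ Wset
  | α :: δ => fun Y Z => ∃ U, Qprog mem R α Y U ∧ Qseq mem R Wset δ U Z

/-- A model graph: a Kripke model whose states are locally consistent saturated sets. -/
structure ModelGraph (Wset : Set (Set Formula)) : Type where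
  R : ℕ → ↥Wset → ↥Wset → Prop
  saturated : ∀ X : ↥Wset, Saturated X.val
  noBot : ∀ X : ↥Wset, Formula.bot ∉ X.val
  consistent : ∀ (X : ↥Wset) (p : ℕ),
    Formula.atom p ∈ X.val → Formula.neg (Formula.atom p) ∉ X.val
  boxCond : ∀ (X Y : ↥Wset) (a : ℕ) (φ : Formula),
    R a X Y → Formula.box (.atom a) φ ∈ X.val → φ ∈ Y.val
  diaCond : ∀ (X : ↥Wset) (α : Program) (φ : Formula),
    Formula.neg (.box α φ) ∈ X.val →
      ∃ Y : ↥Wset, Qprog (fun τ Z => τ ∈ Z.val) R α X Y ∧ Formula.neg φ ∈ Y.val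

/-- The Kripke model of a model graph; valuation: p holds at X iff p ∈ X. -/
def mgModel {Wset : Set (Set Formula)} (G : ModelGraph Wset) : KripkeModel ↥Wset :=
  ⟨G.R, fun X p => Formula.atom p ∈ X.val⟩

/-!
Both halves of the truth lemma (`φ ∈ X` gives `X ⊨ φ`, `¬φ ∈ X` gives `X ⊭ φ`) are proved
together by induction on formulas, mutually with the tests occurring in programs. The only
hard case is `[α]ψ ∈ X` with `X R_α Y`. Unfolding `[α]ψ` in the saturated set `X` along the
profile `ℓ` chosen there, every test of `α` true at `X` lies in `ℓ` (a failed test `τ ∉ ℓ`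
puts `¬τ` into `X`, impossible by induction), so some `δ ∈ P^ℓ(α)` leads from `X` to `Y`
with no larger `α`-distance and has `[δ]ψ ∈ X`. Such a `δ` is empty or starts with an
atomic program, across which the box condition carries the formula one step. An induction
on the distance to `Y`, then on the length of the list of programs, gives `ψ ∈ Y`.
-/

theorem boxes_append (δ₁ δ₂ : List Program) (ψ : Formula) :
    boxes (δ₁ ++ δ₂) ψ = boxes δ₁ (boxes δ₂ ψ) := by
  induction δ₁ with
  | nil => rfl
  | cons γ δ ih => simp only [List.cons_append, boxes, ih]

theorem TestsOf_subset_of_mem_Pfun {ℓ : Set Formula} :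
    ∀ {α : Program} {δ : List Program}, δ ∈ Pfun ℓ α → ∀ γ ∈ δ, TestsOf γ ⊆ TestsOf α
  | .atom _, _, rfl, _, .head _ => le_rfl
  | .test _, _, ⟨rfl, _⟩, _, hγ => nomatch hγ
  | .union _ _, _, .inl h, γ, hγ =>
    (TestsOf_subset_of_mem_Pfun h γ hγ).trans Set.subset_union_left
  | .union _ _, _, .inr h, γ, hγ =>
    (TestsOf_subset_of_mem_Pfun h γ hγ).trans Set.subset_union_right
  | .comp _ _, _, .inl ⟨δ, h, _, rfl⟩, γ, hγ => by
    rcases List.mem_append.mp hγ with hγ | hγ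
    · exact (TestsOf_subset_of_mem_Pfun h γ hγ).trans Set.subset_union_left
    · rw [List.mem_singleton.mp hγ]; exact Set.subset_union_right
  | .comp _ _, _, .inr ⟨h, _⟩, γ, hγ =>
    (TestsOf_subset_of_mem_Pfun h γ hγ).trans Set.subset_union_right
  | .star _, _, .inl rfl, _, hγ => nomatch hγ
  | .star _, _, .inr ⟨δ, h, _, rfl⟩, γ, hγ => by
    rcases List.mem_append.mp hγ with hγ | hγ
    · exact TestsOf_subset_of_mem_Pfun h γ hγ
    · rw [List.mem_singleton.mp hγ]

theorem exists_atom_of_cons_mem_Pfun {ℓ : Set Formula} :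
    ∀ {α γ : Program} {δ : List Program}, γ :: δ ∈ Pfun ℓ α → ∃ a, γ = .atom a
  | .atom a, _, _, rfl => ⟨a, rfl⟩
  | .union _ _, _, _, .inl h | .union _ _, _, _, .inr h | .comp _ _, _, _, .inr ⟨h, _⟩ =>
    exists_atom_of_cons_mem_Pfun h
  | .comp _ _, _, _, .inl ⟨_ :: _, h, _, heq⟩ | .star _, _, _, .inr ⟨_ :: _, h, _, heq⟩ => by
    obtain ⟨rfl, -⟩ := List.cons.inj heq
    exact exists_atom_of_cons_mem_Pfun h

theorem ENat.exists_le_of_iInf_le {ι : Sort*} {f : ι → ℕ∞} {n : ℕ}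
    (h : ⨅ i, f i ≤ n) : ∃ i, f i ≤ n := by
  cases isEmpty_or_nonempty ι
  · simp [iInf_of_empty] at h
  · obtain ⟨i, hi⟩ := ENat.exists_eq_iInf f
    exact ⟨i, hi ▸ h⟩

section Distance

variable {W : Type} (M : KripkeModel W)

theorem distanceSeq_nil_self (v : W) : distanceSeq M [] v v = 0 := by
  simp [distanceSeq]

theorem eq_of_distanceSeq_nil_ne_top {v w : W} (h : distanceSeq M [] v w ≠ ⊤) : v = w := by
  by_contra hvw
  simp [distanceSeq, hvw] at h

theorem distanceSeq_singleton (α : Program) (v w : W) :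
    distanceSeq M [α] v w = distance M α v w := by
  refine le_antisymm ((iInf_le _ w).trans (by simp [distanceSeq_nil_self])) (le_iInf fun u => ?_)
  by_cases h : u = w
  · simp [h, distanceSeq_nil_self]
  · simp [distanceSeq, h]

theorem distanceSeq_append_le (δ₁ δ₂ : List Program) (v u w : W) :
    distanceSeq M (δ₁ ++ δ₂) v w ≤ distanceSeq M δ₁ v u + distanceSeq M δ₂ u w := by
  induction δ₁ generalizing v with
  | nil =>
    by_cases h : v = u
    · simp [h, distanceSeq_nil_self]
    · simp [distanceSeq, h]
  | cons γ δ ih =>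
    simp only [List.cons_append, distanceSeq, ENat.iInf_add]
    exact iInf_mono fun x => (add_le_add_right (ih x) _).trans_eq (add_assoc ..).symm

theorem exists_rel_of_distanceSeq_atom_cons_le {a : ℕ} {δ : List Program} {v w : W} {n : ℕ}
    (h : distanceSeq M (.atom a :: δ) v w ≤ n) :
    ∃ u, M.rel a v u ∧ ∃ k < n, distanceSeq M δ u w ≤ k := by
  obtain ⟨u, hu⟩ := ENat.exists_le_of_iInf_le h
  by_cases hvu : M.rel a v u
  · refine ⟨u, hvu, ?_⟩
    simp only [distance, hvu, if_true] at hu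
    obtain ⟨k, hk⟩ := ENat.ne_top_iff_exists.mp (ne_top_of_le_ne_top (ENat.natCast_ne_top n)
      (le_add_self.trans hu))
    refine ⟨k, ?_, hk.symm.le⟩
    rw [← hk, add_comm] at hu
    exact_mod_cast ENat.add_one_le_iff (ENat.natCast_ne_top k) |>.mp hu
  · simp [distance, hvu] at hu

theorem distance_star_le_listSum (α : Program) {v w : W} {l : List W}
    (h : (v :: l).getLast? = some w) :
    distance M (.star α) v w ≤ listSum (distance M α) (v :: l) :=
  iInf₂_le (v :: l) ⟨rfl, h⟩

theorem distance_ne_top_of_relate :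
    ∀ {α : Program} {v w : W}, relate M α v w → distance M α v w ≠ ⊤
  | .atom _, _, _, h => by simp [distance, show M.rel _ _ _ from h]
  | .test _, _, _, ⟨rfl, h⟩ => by simp [distance, h]
  | .union _ _, _, _, .inl h => by simp [distance, distance_ne_top_of_relate h]
  | .union _ _, _, _, .inr h => by simp [distance, distance_ne_top_of_relate h]
  | .comp _ _, _, _, ⟨u, h₁, h₂⟩ =>
    ne_top_of_le_ne_top (WithTop.add_ne_top.mpr
      ⟨distance_ne_top_of_relate h₁, distance_ne_top_of_relate h₂⟩) (iInf_le _ u)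
  | .star α, v, w, h => by
    suffices ∃ l : List W, (v :: l).getLast? = some w ∧ listSum (distance M α) (v :: l) ≠ ⊤ by
      obtain ⟨l, hl, hsum⟩ := this
      exact ne_top_of_le_ne_top hsum (distance_star_le_listSum M α hl)
    induction h using Relation.ReflTransGen.head_induction_on with
    | refl => exact ⟨[], rfl, by simp [listSum]⟩
    | head hvu _ ih =>
      obtain ⟨l, hl, hsum⟩ := ih
      exact ⟨_ :: l, by simpa using hl,
        WithTop.add_ne_top.mpr ⟨distance_ne_top_of_relate hvu, hsum⟩⟩

variable {ℓ : Set Formula}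

theorem exists_mem_Pfun_star_distanceSeq_le {α : Program}
    (hα : ∀ {v w : W}, (∀ τ ∈ TestsOf α, evaluate M v τ → τ ∈ ℓ) → distance M α v w ≠ ⊤ →
      ∃ δ ∈ Pfun ℓ α, distanceSeq M δ v w ≤ distance M α v w) :
    ∀ (l : List W) {v w : W}, (∀ τ ∈ TestsOf α, evaluate M v τ → τ ∈ ℓ) →
      (v :: l).getLast? = some w →
      ∃ δ ∈ Pfun ℓ (.star α), distanceSeq M δ v w ≤ listSum (distance M α) (v :: l)
  | [], v, w, _, h => by
    obtain rfl : v = w := by simpa using h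
    exact ⟨[], Or.inl rfl, by simp [distanceSeq_nil_self]⟩
  | u :: l, v, w, ht, h => by
    have hsum : listSum (distance M α) (v :: u :: l) =
        distance M α v u + listSum (distance M α) (u :: l) := rfl
    have hl : (u :: l).getLast? = some w := by simpa using h
    by_cases hvu : distance M α v u = ⊤
    · exact ⟨[], Or.inl rfl, by simp [hsum, hvu]⟩
    obtain ⟨_ | ⟨γ, δ⟩, hδ, hle⟩ := hα ht hvu
    · obtain rfl : v = u := eq_of_distanceSeq_nil_ne_top M (ne_top_of_le_ne_top hvu hle)
      obtain ⟨δ, hδ, hle'⟩ := exists_mem_Pfun_star_distanceSeq_le hα l ht hl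
      exact ⟨δ, hδ, hle'.trans (hsum ▸ le_add_self)⟩
    · refine ⟨γ :: δ ++ [.star α], Or.inr ⟨_, hδ, List.cons_ne_nil γ δ, rfl⟩, ?_⟩
      refine (distanceSeq_append_le M (γ :: δ) [.star α] v u w).trans ?_
      rw [distanceSeq_singleton, hsum]
      exact add_le_add hle (distance_star_le_listSum M α hl)

theorem exists_mem_Pfun_distanceSeq_le :
    ∀ {α : Program} {v w : W}, (∀ τ ∈ TestsOf α, evaluate M v τ → τ ∈ ℓ) →
      distance M α v w ≠ ⊤ → ∃ δ ∈ Pfun ℓ α, distanceSeq M δ v w ≤ distance M α v w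
  | .atom a, v, w, _, _ => ⟨[.atom a], rfl, (distanceSeq_singleton M _ v w).le⟩
  | .test τ, v, w, ht, hne => by
    unfold distance at hne ⊢
    split_ifs at hne ⊢ with h
    · obtain ⟨rfl, hτ⟩ := h
      exact ⟨[], ⟨rfl, ht τ rfl hτ⟩, by simp [distanceSeq_nil_self]⟩
    · exact absurd rfl hne
  | .union α β, v, w, ht, hne => by
    have hd : distance M (.union α β) v w = min (distance M α v w) (distance M β v w) := rfl
    rcases le_total (distance M α v w) (distance M β v w) with hle | hle
    · rw [hd, min_eq_left hle] at hne ⊢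
      obtain ⟨δ, hδ, h⟩ := exists_mem_Pfun_distanceSeq_le (fun τ h => ht τ (Or.inl h)) hne
      exact ⟨δ, Or.inl hδ, h⟩
    · rw [hd, min_eq_right hle] at hne ⊢
      obtain ⟨δ, hδ, h⟩ := exists_mem_Pfun_distanceSeq_le (fun τ h => ht τ (Or.inr h)) hne
      exact ⟨δ, Or.inr hδ, h⟩
  | .comp α β, v, w, ht, hne => by
    have : Nonempty W := ⟨v⟩
    obtain ⟨u, hu⟩ := ENat.exists_eq_iInf fun u => distance M α v u + distance M β u w
    change _ = distance M (.comp α β) v w at hu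
    rw [← hu] at hne ⊢
    obtain ⟨hα, hβ⟩ := WithTop.add_ne_top.mp hne
    obtain ⟨_ | ⟨γ, δ⟩, hδ, hle⟩ := exists_mem_Pfun_distanceSeq_le (fun τ h => ht τ (Or.inl h)) hα
    · obtain rfl : v = u := eq_of_distanceSeq_nil_ne_top M (ne_top_of_le_ne_top hα hle)
      obtain ⟨δ', hδ', hle'⟩ := exists_mem_Pfun_distanceSeq_le (fun τ h => ht τ (Or.inr h)) hβ
      exact ⟨δ', Or.inr ⟨hδ', hδ⟩, hle'.trans le_add_self⟩
    · refine ⟨γ :: δ ++ [β], Or.inl ⟨_, hδ, List.cons_ne_nil γ δ, rfl⟩, ?_⟩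
      refine (distanceSeq_append_le M (γ :: δ) [β] v u w).trans ?_
      rw [distanceSeq_singleton]
      exact add_le_add_left hle _
  | .star α, v, w, ht, hne => by
    have : Nonempty (List W) := ⟨[]⟩
    obtain ⟨l, hl⟩ := ENat.exists_eq_iInf fun l : List W =>
      ⨅ (_ : l.head? = some v ∧ l.getLast? = some w), listSum (distance M α) l
    change _ = distance M (.star α) v w at hl
    by_cases hlvw : l.head? = some v ∧ l.getLast? = some w
    · rw [iInf_pos hlvw] at hl
      obtain ⟨hv, hw⟩ := hlvw
      cases l with
      | nil => simp at hv
      | cons x l =>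
      obtain rfl : x = v := by simpa using hv
      rw [← hl]
      exact exists_mem_Pfun_star_distanceSeq_le M
        (fun ht hne => exists_mem_Pfun_distanceSeq_le ht hne) l ht hw
    · simp [← hl, hlvw] at hne

end Distance

namespace ModelGraph

variable {Wset : Set (Set Formula)} (G : ModelGraph Wset)

def Truthful (φ : Formula) : Prop :=
  ∀ X : ↥Wset, (φ ∈ X.val → evaluate (mgModel G) X φ) ∧
    (Formula.neg φ ∈ X.val → ¬ evaluate (mgModel G) X φ)

variable {G}

theorem relate_of_Qprog : ∀ {α : Program}, (∀ τ ∈ TestsOf α, G.Truthful τ) →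
    ∀ {X Y : ↥Wset}, Qprog (fun τ Z => τ ∈ Z.val) G.R α X Y → relate (mgModel G) α X Y
  | .atom _, _, _, _, h => h
  | .test τ, hT, X, _, ⟨rfl, h⟩ => ⟨rfl, (hT τ rfl X).1 h⟩
  | .union _ _, hT, _, _, .inl h => .inl (relate_of_Qprog (fun τ h => hT τ (.inl h)) h)
  | .union _ _, hT, _, _, .inr h => .inr (relate_of_Qprog (fun τ h => hT τ (.inr h)) h)
  | .comp _ _, hT, _, _, ⟨U, h₁, h₂⟩ =>
    ⟨U, relate_of_Qprog (fun τ h => hT τ (.inl h)) h₁,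
      relate_of_Qprog (fun τ h => hT τ (.inr h)) h₂⟩
  | .star α, hT, X, Y, h =>
    Relation.ReflTransGen.mono (fun _ _ => relate_of_Qprog (α := α) hT) X Y h

theorem mem_of_boxes_mem (ψ : Formula) (Y : ↥Wset) (n : ℕ) :
    ∀ (δ : List Program) (X : ↥Wset), (∀ γ ∈ δ, ∀ τ ∈ TestsOf γ, G.Truthful τ) →
      distanceSeq (mgModel G) δ X Y ≤ n → boxes δ ψ ∈ X.val → ψ ∈ Y.val := by
  induction n using Nat.strong_induction_on with
  | _ n ihn =>
  intro δ
  induction δ with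
  | nil =>
    intro X _ hd hmem
    rwa [← eq_of_distanceSeq_nil_ne_top _ (ne_top_of_le_ne_top (ENat.natCast_ne_top n) hd)]
  | cons γ δ ih =>
    intro X hT hd hmem
    obtain ⟨U, hU⟩ := ENat.exists_le_of_iInf_le hd
    obtain ⟨-, -, -, hbox, -⟩ := G.saturated X
    obtain ⟨_, ⟨ℓ, -, rfl⟩, hsub⟩ := hbox γ (boxes δ ψ) hmem
    have htests : ∀ τ ∈ TestsOf γ, evaluate (mgModel G) X τ → τ ∈ ℓ := fun τ hτ hX =>
      by_contra fun hℓ => (hT γ List.mem_cons_self τ hτ X).2 (hsub (.inl ⟨τ, hτ, hℓ, rfl⟩)) hX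
    obtain ⟨δ', hδ', hle⟩ := exists_mem_Pfun_distanceSeq_le _ htests
      (ne_top_of_le_ne_top (ENat.natCast_ne_top n) (le_self_add.trans hU))
    have hmem' : boxes (δ' ++ δ) ψ ∈ X.val := boxes_append δ' δ ψ ▸ hsub (.inr ⟨δ', hδ', rfl⟩)
    have hd' : distanceSeq (mgModel G) (δ' ++ δ) X Y ≤ n :=
      (distanceSeq_append_le _ δ' δ X U Y).trans ((add_le_add_left hle _).trans hU)
    have hT' : ∀ γ' ∈ δ' ++ δ, ∀ τ ∈ TestsOf γ', G.Truthful τ := by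
      intro γ' hγ' τ hτ
      rcases List.mem_append.mp hγ' with hγ' | hγ'
      · exact hT γ List.mem_cons_self τ (TestsOf_subset_of_mem_Pfun hδ' γ' hγ' hτ)
      · exact hT γ' (List.mem_cons_of_mem γ hγ') τ hτ
    rcases δ' with _ | ⟨γ', δ'⟩
    · exact ih X (fun γ' h => hT γ' (List.mem_cons_of_mem γ h)) hd' hmem'
    · obtain ⟨a, rfl⟩ := exists_atom_of_cons_mem_Pfun hδ'
      obtain ⟨U', hR, k, hk, hd''⟩ := exists_rel_of_distanceSeq_atom_cons_le _ hd'
      exact ihn k hk _ U' (fun γ' h => hT' γ' (List.mem_cons_of_mem _ h)) hd''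
        (G.boxCond X U' a _ hR hmem')

mutual

theorem truthful : ∀ φ : Formula, G.Truthful φ
  | .bot => fun X => ⟨fun h => absurd h (G.noBot X), fun _ h => h⟩
  | .atom p => fun X => ⟨id, fun hn hp => G.consistent X p hp hn⟩
  | .and φ ψ => fun X => by
    obtain ⟨-, hand, hnand, -, -⟩ := G.saturated X
    refine ⟨fun h => ⟨(truthful φ X).1 (hand φ ψ h).1, (truthful ψ X).1 (hand φ ψ h).2⟩,
      fun h hX => ?_⟩
    rcases hnand φ ψ h with h' | h'
    · exact (truthful φ X).2 h' hX.1
    · exact (truthful ψ X).2 h' hX.2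
  | .neg φ => fun X => by
    obtain ⟨hnn, -, -, -, -⟩ := G.saturated X
    exact ⟨(truthful φ X).2, fun h hX => hX ((truthful φ X).1 (hnn φ h))⟩
  | .box α ψ => fun X => by
    refine ⟨fun h Y hXY => (truthful ψ Y).1 ?_, fun h hX => ?_⟩
    · obtain ⟨n, hn⟩ := ENat.ne_top_iff_exists.mp (distance_ne_top_of_relate _ hXY)
      refine mem_of_boxes_mem ψ Y n [α] X ?_ ((distanceSeq_singleton _ α X Y).trans hn.symm).le h
      simpa using truthful_of_mem_TestsOf α
    · obtain ⟨Y, hQ, hY⟩ := G.diaCond X α ψ h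
      exact (truthful ψ Y).2 hY (hX Y (relate_of_Qprog (truthful_of_mem_TestsOf α) hQ))

theorem truthful_of_mem_TestsOf : ∀ α : Program, ∀ τ ∈ TestsOf α, G.Truthful τ
  | .atom _ => nofun
  | .test τ => fun _ h => h ▸ truthful τ
  | .union α β | .comp α β => fun τ h =>
    h.elim (truthful_of_mem_TestsOf α τ) (truthful_of_mem_TestsOf β τ)
  | .star α => truthful_of_mem_TestsOf α

end

end ModelGraph

/-- Truth Lemma for model graphs. -/
theorem truthLemma {Wset : Set (Set Formula)} (G : ModelGraph Wset)
    (X : ↥Wset) (φ : Formula) (h : φ ∈ X.val) :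
    evaluate (mgModel G) X φ :=
  (G.truthful φ X).1 h
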